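/- Every unbalanced signed graph of order 5 containing no negative cycle of length 3 and no negative cycle of length 4 is switching isomorphic to Γ_5, the 5-cycle C5 with exactly one negative edge; moreover ρ(Γ_5) = −λ5(Γ_5) = 2 and λ1(Γ_5) = (1+√5)/2. -/

import Mathlib

structure SignedGraph (V : Type*) where
  G : SimpleGraph V
  sign : V → V → ℤ
  sign_symm : ∀ u v, sign u v = sign v u
  sign_mem : ∀ u v, G.Adj u v → sign u v = 1 ∨ sign u v = -1
  sign_not : ∀ u v, ¬ G.Adj u v → sign u v = 0

namespace SignedGraph

variable {V : Type*}

/-- The adjacency matrix of a signed graph, over `ℝ`. -/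
noncomputable def adjMatrix (Γ : SignedGraph V) : Matrix V V ℝ :=
  fun u v => (Γ.sign u v : ℝ)

/-- The largest eigenvalue `λ₁` of a signed graph. -/
noncomputable def lambda1 (Γ : SignedGraph V) [Fintype V] : ℝ :=
  letI := Classical.decEq V
  sSup (spectrum ℝ Γ.adjMatrix)

/-- The smallest eigenvalue `λₙ` of a signed graph. -/
noncomputable def lambdaMin (Γ : SignedGraph V) [Fintype V] : ℝ :=
  letI := Classical.decEq V
  sInf (spectrum ℝ Γ.adjMatrix)

/-- The spectral radius `ρ = max {λ₁, -λₙ}` of a signed graph. -/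
noncomputable def rho (Γ : SignedGraph V) [Fintype V] : ℝ :=
  max Γ.lambda1 (-Γ.lambdaMin)

/-- The sign (product of edge signs) of a walk. -/
def walkSign (Γ : SignedGraph V) {G' : SimpleGraph V} : ∀ {u v : V}, G'.Walk u v → ℤ
  | _, _, .nil => 1
  | _, _, .cons (u := a) (v := b) _ p => Γ.sign a b * walkSign Γ p

/-- A signed graph is balanced if every cycle is positive. -/
def Balanced (Γ : SignedGraph V) : Prop :=
  ∀ (u : V) (w : Γ.G.Walk u u), w.IsCycle → Γ.walkSign w = 1

def Unbalanced (Γ : SignedGraph V) : Prop := ¬ Γ.Balanced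

/-- `Γ` has a negative cycle of length `k`. -/
def HasNegCycleOfLength (Γ : SignedGraph V) (k : ℕ) : Prop :=
  ∃ (u : V) (w : Γ.G.Walk u u), w.IsCycle ∧ Γ.walkSign w = -1 ∧ w.length = k

/-- Switching equivalence: same underlying graph and signs related by a switching function. -/
def SwitchingEquivalent (Γ Γ' : SignedGraph V) : Prop :=
  Γ.G = Γ'.G ∧ ∃ s : V → ℤ, (∀ v, s v = 1 ∨ s v = -1) ∧
    ∀ u v, Γ'.sign u v = s u * Γ.sign u v * s v

/-- Switching isomorphism. -/
def SwitchingIsomorphic {V' : Type*} (Γ : SignedGraph V) (Γ' : SignedGraph V') : Prop :=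
  ∃ (e : V ≃ V') (s : V → ℤ), (∀ v, s v = 1 ∨ s v = -1) ∧
    (∀ u v, Γ'.G.Adj (e u) (e v) ↔ Γ.G.Adj u v) ∧
    (∀ u v, Γ'.sign (e u) (e v) = s u * Γ.sign u v * s v)

/-- Build a signed graph from a symmetric sign function with values in `{0, 1, -1}`. -/
def ofSign (s : V → V → ℤ) (hsymm : ∀ u v, s u v = s v u)
    (hloop : ∀ v, s v v = 0)
    (hval : ∀ u v, s u v = 0 ∨ s u v = 1 ∨ s u v = -1) : SignedGraph V where
  G := { Adj := fun u v => s u v ≠ 0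
         symm := ⟨fun u v h => by
           show s v u ≠ 0
           rw [hsymm v u]; exact h⟩
         loopless := ⟨fun v h => h (hloop v)⟩ }
  sign := s
  sign_symm := hsymm
  sign_mem := fun u v h => (hval u v).resolve_left h
  sign_not := fun u v h => not_not.mp h

/-- Build a signed graph on `Fin n` from a sign function on ordered pairs of naturals. -/
def ofMinMaxAux (n : ℕ) (aux : ℕ → ℕ → ℤ) (h0 : ∀ a, aux a a = 0)
    (hval : ∀ a b, aux a b = 0 ∨ aux a b = 1 ∨ aux a b = -1) : SignedGraph (Fin n) :=
  ofSign (fun i j => aux (min i.val j.val) (max i.val j.val))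
    (fun i j => by
      show aux (min i.val j.val) (max i.val j.val) = aux (min j.val i.val) (max j.val i.val)
      rw [min_comm, max_comm])
    (fun i => by
      show aux (min i.val i.val) (max i.val i.val) = 0
      rw [min_self, max_self, h0])
    (fun i j => hval _ _)

def gammaNAux : ℕ → ℕ → ℤ := fun a b =>
  if a = b then 0
  else if a = 0 ∧ b = 1 then -1
  else if a = 0 ∧ b = 2 then 1
  else if a = 1 ∧ b = 3 then 1
  else if 2 ≤ a ∧ a < b ∧ ¬(a = 2 ∧ b = 3) then 1
  else 0

/-- The signed graph `Γₙ`: a copy of `K_{n-2}` (on `{2, …, n-1}`) with the edge `{2,3}`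
removed, together with two new vertices `0, 1` and edges `{0,1}` (negative),
`{0,2}` and `{1,3}` (positive); all other edges positive. -/
def GammaN (n : ℕ) : SignedGraph (Fin n) :=
  ofMinMaxAux n gammaNAux (fun a => by simp [gammaNAux])
    (fun a b => by unfold gammaNAux; split_ifs <;> simp)

def gammaNTauAux (τ : ℕ) : ℕ → ℕ → ℤ := fun a b =>
  if a = b then 0
  else if a = 0 ∧ b = 1 then -1
  else if a = 0 ∧ b = 3 then 1
  else if a = 0 ∧ 4 ≤ b ∧ b ≤ τ + 3 then 1
  else if a = 1 ∧ b = 2 then 1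
  else if a = 2 ∧ τ + 4 ≤ b then 1
  else if a = 3 ∧ 4 ≤ b then 1
  else if 4 ≤ a ∧ a < b then 1
  else 0

/-- The signed graph `Γ_{n,τ}`: here `v₁ = 0`, `v₂ = 1`, `v₃ = 2`, `v₅ = 3`,
`X = {4, …, τ+3}`, `Y = {τ+4, …, n-1}` (with `v₄ = τ+4 ∈ Y`); the edge `{0,1}` is the
unique negative edge. -/
def GammaNTau (n τ : ℕ) : SignedGraph (Fin n) :=
  ofMinMaxAux n (gammaNTauAux τ) (fun a => by simp [gammaNTauAux])
    (fun a b => by unfold gammaNTauAux; split_ifs <;> simp)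

/-- The negation `-Γ` of a signed graph. -/
def neg (Γ : SignedGraph V) : SignedGraph V where
  G := Γ.G
  sign := fun u v => - Γ.sign u v
  sign_symm := fun u v => by
    show -Γ.sign u v = -Γ.sign v u
    rw [Γ.sign_symm]
  sign_mem := fun u v h => by
    show -Γ.sign u v = 1 ∨ -Γ.sign u v = -1
    rcases Γ.sign_mem u v h with h' | h' <;> simp [h']
  sign_not := fun u v h => by
    show -Γ.sign u v = 0
    simp [Γ.sign_not u v h]

/-- The induced signed subgraph on a set of vertices. -/
def induce (Γ : SignedGraph V) (S : Set V) : SignedGraph S where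
  G := { Adj := fun u v => Γ.G.Adj u v
         symm := ⟨fun u v h => SimpleGraph.Adj.symm h⟩
         loopless := ⟨fun u h => SimpleGraph.Adj.ne h rfl⟩ }
  sign := fun u v => Γ.sign u v
  sign_symm := fun u v => Γ.sign_symm u v
  sign_mem := fun u v h => Γ.sign_mem u v h
  sign_not := fun u v h => Γ.sign_not u v h

/-- `S` is a balanced clique of `Γ`: it induces a complete subgraph which is balanced. -/
def IsBalancedClique [DecidableEq V] (Γ : SignedGraph V) (S : Finset V) : Prop :=
  (∀ u ∈ S, ∀ v ∈ S, u ≠ v → Γ.G.Adj u v) ∧ (Γ.induce (S : Set V)).Balanced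

end SignedGraph

namespace SignedGraph

def c5Aux : ℕ → ℕ → ℤ := fun a b =>
  if a = 0 ∧ b = 1 then -1
  else if (a = 1 ∧ b = 2) ∨ (a = 2 ∧ b = 3) ∨ (a = 3 ∧ b = 4) ∨ (a = 0 ∧ b = 4) then 1
  else 0

/-- `Γ₅`: the 5-cycle `C₅` (on vertices `0,1,2,3,4` in cyclic order) with exactly one negative
edge, namely `{0,1}`. -/
def Gamma5 : SignedGraph (Fin 5) :=
  ofMinMaxAux 5 c5Aux
    (fun a => by unfold c5Aux; split_ifs <;> omega)
    (fun a b => by unfold c5Aux; split_ifs <;> simp)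

end SignedGraph

/-!
An unbalanced signed graph has a negative cycle; on five vertices it has length at most 5, and
by hypothesis not 3 or 4, so it is a Hamiltonian pentagon `x 0, …, x 4`. A chord `x i x (i+2)`
cuts the pentagon into a triangle and a quadrangle whose signs multiply to the sign of the
pentagon, the chord's sign appearing twice; so one of them would be a negative 3- or 4-cycle.
Hence the underlying graph is `C₅`, and switching along the cycle pushes all the negativity onto
a single edge. The characteristic polynomial of `Γ₅` is `(x + 2) (x² - x - 1)²`.
-/

theorem SimpleGraph.Walk.IsCycle.length_le_card {V : Type*} [Fintype V] {G : SimpleGraph V}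
    {u : V} {w : G.Walk u u} (hw : w.IsCycle) : w.length ≤ Fintype.card V := by
  rw [← length_tail_add_one hw.not_nil]
  exact hw.isPath_tail.length_lt

theorem SimpleGraph.Walk.isCycle_triangle {V : Type*} {G : SimpleGraph V} {a b c : V}
    (hab : G.Adj a b) (hbc : G.Adj b c) (hca : G.Adj c a) :
    (cons hab (cons hbc (cons hca nil))).IsCycle := by
  simp [cons_isCycle_iff, hab.ne, hbc.ne, hca.ne, hab.ne.symm, hca.ne.symm]

theorem SimpleGraph.Walk.isCycle_quadrangle {V : Type*} {G : SimpleGraph V} {a b c d : V}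
    (hab : G.Adj a b) (hbc : G.Adj b c) (hcd : G.Adj c d) (hda : G.Adj d a) (hac : a ≠ c)
    (hbd : b ≠ d) : (cons hab (cons hbc (cons hcd (cons hda nil)))).IsCycle := by
  simp [cons_isCycle_iff, hab.ne, hbc.ne, hcd.ne, hda.ne, hab.ne.symm, hda.ne.symm, hac, hbd,
    hac.symm]

open Fin.NatCast in
theorem exists_switching_of_prod_eq {n : ℕ} {a b : Fin (n + 1) → ℤ} (ha : ∀ i, IsUnit (a i))
    (hb : ∀ i, IsUnit (b i)) (hab : ∏ i, a i = ∏ i, b i) :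
    ∃ s : Fin (n + 1) → ℤ, (∀ i, IsUnit (s i)) ∧ ∀ i, s i * a i * s (i + 1) = b i := by
  let s : Fin (n + 1) → ℤ := fun i => ∏ k ∈ Finset.range i, a k * b k
  have hs : ∀ i, IsUnit (s i) := fun i => IsUnit.prod_iff.mpr fun k _ => (ha _).mul (hb _)
  refine ⟨s, hs, fun i => ?_⟩
  by_cases hi : i = Fin.last n
  · subst hi
    have hB : IsUnit (∏ k ∈ Finset.range n, b k) := IsUnit.prod_iff.mpr fun k _ => hb _
    simp only [Fin.prod_univ_castSucc, ← Fin.coe_eq_castSucc] at hab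
    rw [Fin.prod_univ_eq_prod_range (fun k => a k), Fin.prod_univ_eq_prod_range (fun k => b k)]
      at hab
    simp only [s, Fin.last_add_one, Fin.val_zero, Finset.prod_range_zero, Fin.val_last,
      Finset.prod_mul_distrib]
    linear_combination (∏ k ∈ Finset.range n, b k) * hab +
      b (Fin.last n) * Int.isUnit_mul_self hB
  · have hsucc : s (i + 1) = s i * (a i * b i) := by
      simp only [s, Fin.val_add_one_of_lt (Fin.lt_last_iff_ne_last.mpr hi),
        Finset.prod_range_succ, Fin.cast_val_eq_self]
    rw [hsucc]
    linear_combination (s i * s i * b i) * Int.isUnit_mul_self (ha i) +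
      b i * Int.isUnit_mul_self (hs i)

namespace SignedGraph

variable {V : Type*} (Γ : SignedGraph V)

theorem adj_iff_sign_ne_zero {u v : V} : Γ.G.Adj u v ↔ Γ.sign u v ≠ 0 := by
  refine ⟨fun h => ?_, fun h => not_not.mp (mt (Γ.sign_not u v) h)⟩
  rcases Γ.sign_mem u v h with h1 | h1 <;> simp [h1]

theorem isUnit_sign {u v : V} (h : Γ.G.Adj u v) : IsUnit (Γ.sign u v) :=
  Int.isUnit_iff.mpr (Γ.sign_mem u v h)

theorem isUnit_walkSign : ∀ {u v : V} (w : Γ.G.Walk u v), IsUnit (Γ.walkSign w)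
  | _, _, .nil => isUnit_one
  | _, _, .cons h p => (Γ.isUnit_sign h).mul (isUnit_walkSign p)

theorem walkSign_eq_prod_getVert {G' : SimpleGraph V} : ∀ {u v : V} (w : G'.Walk u v),
    Γ.walkSign w = ∏ i ∈ Finset.range w.length, Γ.sign (w.getVert i) (w.getVert (i + 1))
  | _, _, .nil => rfl
  | _, _, .cons h p => by
    simp [walkSign, Finset.prod_range_succ', walkSign_eq_prod_getVert p, mul_comm]

theorem exists_isCycle_walkSign_eq_neg_one (h : Γ.Unbalanced) :
    ∃ (u : V) (w : Γ.G.Walk u u), w.IsCycle ∧ Γ.walkSign w = -1 := by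
  simp only [Unbalanced, Balanced, not_forall] at h
  obtain ⟨u, w, hw, hne⟩ := h
  exact ⟨u, w, hw, (Int.isUnit_iff.mp (Γ.isUnit_walkSign w)).resolve_left hne⟩

structure IsNegPolygon {n : ℕ} [NeZero n] (x : Fin n → V) : Prop where
  injective : Function.Injective x
  adj : ∀ i, Γ.G.Adj (x i) (x (i + 1))
  prod_sign : ∏ i, Γ.sign (x i) (x (i + 1)) = -1

theorem exists_isNegPolygon {u : V} {w : Γ.G.Walk u u} (hw : w.IsCycle)
    (hneg : Γ.walkSign w = -1) {n : ℕ} (hn : w.length = n + 1) :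
    ∃ x : Fin (n + 1) → V, Γ.IsNegPolygon x := by
  have hsucc : ∀ i : Fin (n + 1), w.getVert ↑(i + 1) = w.getVert (i + 1) := by
    intro i
    rw [Fin.val_add_one]
    split_ifs with h
    · rw [h, Fin.val_last, ← hn, SimpleGraph.Walk.getVert_length, SimpleGraph.Walk.getVert_zero]
    · rfl
  refine ⟨fun i => w.getVert i, ⟨fun i j hij => ?_, fun i => ?_, ?_⟩⟩
  · exact Fin.ext (hw.getVert_injOn' (by simp; omega) (by simp; omega) hij)
  · rw [hsucc]
    exact w.adj_getVert_succ (by omega)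
  · simp only [hsucc]
    rw [← hneg, walkSign_eq_prod_getVert, hn]
    exact Fin.prod_univ_eq_prod_range (fun i => Γ.sign (w.getVert i) (w.getVert (i + 1))) _

variable {Γ}

theorem IsNegPolygon.rotate {n : ℕ} [NeZero n] {x : Fin n → V} (hx : Γ.IsNegPolygon x)
    (k : Fin n) : Γ.IsNegPolygon (fun i => x (i + k)) where
  injective := hx.injective.comp (add_left_injective k)
  adj i := add_right_comm i k 1 ▸ hx.adj (i + k)
  prod_sign := by
    simp only [add_right_comm _ 1 k]
    exact (Fintype.prod_equiv (Equiv.addRight k) _ _ fun _ => rfl).trans hx.prod_sign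

open SimpleGraph.Walk in
theorem IsNegPolygon.not_adj_zero_two (h3 : ¬ Γ.HasNegCycleOfLength 3)
    (h4 : ¬ Γ.HasNegCycleOfLength 4) {x : Fin 5 → V} (hx : Γ.IsNegPolygon x) :
    ¬ Γ.G.Adj (x 0) (x 2) := by
  intro hc
  have a0 : Γ.G.Adj (x 0) (x 1) := hx.adj 0
  have a1 : Γ.G.Adj (x 1) (x 2) := hx.adj 1
  have a2 : Γ.G.Adj (x 2) (x 3) := hx.adj 2
  have a3 : Γ.G.Adj (x 3) (x 4) := hx.adj 3
  have a4 : Γ.G.Adj (x 4) (x 0) := hx.adj 4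
  let tri := cons a0 (cons a1 (cons hc.symm nil))
  let quad := cons hc (cons a2 (cons a3 (cons a4 nil)))
  have hpenta : Γ.sign (x 0) (x 1) * Γ.sign (x 1) (x 2) * Γ.sign (x 2) (x 3) *
      Γ.sign (x 3) (x 4) * Γ.sign (x 4) (x 0) = -1 := by
    rw [← hx.prod_sign, Fin.prod_univ_five]
    rfl
  have hprod : Γ.walkSign tri * Γ.walkSign quad = -1 := by
    simp only [tri, quad, walkSign, Γ.sign_symm (x 2) (x 0)]
    linear_combination (Γ.sign (x 0) (x 1) * Γ.sign (x 1) (x 2) * Γ.sign (x 2) (x 3) *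
      Γ.sign (x 3) (x 4) * Γ.sign (x 4) (x 0)) * Int.isUnit_mul_self (Γ.isUnit_sign hc) + hpenta
  rcases Int.eq_one_or_neg_one_of_mul_eq_neg_one' hprod with ⟨-, hquad⟩ | ⟨htri, -⟩
  · exact h4 ⟨_, quad, isCycle_quadrangle hc a2 a3 a4 (hx.injective.ne (by decide))
      (hx.injective.ne (by decide)), hquad, rfl⟩
  · exact h3 ⟨_, tri, isCycle_triangle a0 a1 hc.symm, htri, rfl⟩

theorem IsNegPolygon.not_adj_add_two (h3 : ¬ Γ.HasNegCycleOfLength 3)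
    (h4 : ¬ Γ.HasNegCycleOfLength 4) {x : Fin 5 → V} (hx : Γ.IsNegPolygon x) (i : Fin 5) :
    ¬ Γ.G.Adj (x i) (x (i + 2)) := by
  simpa [add_comm] using (hx.rotate i).not_adj_zero_two h3 h4

theorem gamma5_adj_iff {i j : Fin 5} : Gamma5.G.Adj i j ↔ j = i + 1 ∨ i = j + 1 := by
  rw [adj_iff_sign_ne_zero]
  revert i j
  decide

theorem gamma5_isUnit_sign (i : Fin 5) : IsUnit (Gamma5.sign i (i + 1)) := by
  rw [Int.isUnit_iff]
  revert i
  decide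

theorem gamma5_prod_sign : ∏ i : Fin 5, Gamma5.sign i (i + 1) = -1 := by
  decide

theorem IsNegPolygon.switchingIsomorphic_gamma5 [Fintype V] (hcard : Fintype.card V = 5)
    {x : Fin 5 → V} (hx : Γ.IsNegPolygon x) (hchord : ∀ i, ¬ Γ.G.Adj (x i) (x (i + 2))) :
    Γ.SwitchingIsomorphic Gamma5 := by
  have hbij : Function.Bijective x :=
    (Fintype.bijective_iff_injective_and_card x).mpr ⟨hx.injective, by simp [hcard]⟩
  have hadj : ∀ i j, Γ.G.Adj (x i) (x j) ↔ Gamma5.G.Adj i j := by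
    intro i j
    obtain ⟨d, rfl⟩ : ∃ d, j = i + d := ⟨j - i, by abel⟩
    rw [gamma5_adj_iff]
    fin_cases d
    · simp
    · simpa using hx.adj i
    · simpa [add_assoc] using hchord i
    · simpa [add_assoc, Γ.G.adj_comm] using hchord (i + 3)
    · simpa [add_assoc, Γ.G.adj_comm] using hx.adj (i + 4)
  obtain ⟨t, ht, hswitch⟩ := exists_switching_of_prod_eq (fun i => Γ.isUnit_sign (hx.adj i))
    gamma5_isUnit_sign (hx.prod_sign.trans gamma5_prod_sign.symm)
  have hsign : ∀ i j, Gamma5.sign i j = t i * Γ.sign (x i) (x j) * t j := by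
    intro i j
    by_cases h : Gamma5.G.Adj i j
    · rcases gamma5_adj_iff.mp h with rfl | rfl
      · exact (hswitch i).symm
      · rw [Gamma5.sign_symm, Γ.sign_symm, ← hswitch j]
        ring
    · rw [Gamma5.sign_not _ _ h, Γ.sign_not _ _ ((hadj i j).not.mpr h)]
      ring
  let e := Equiv.ofBijective x hbij
  refine ⟨e.symm, fun v => t (e.symm v), fun v => Int.isUnit_iff.mp (ht _), fun u v => ?_,
    fun u v => ?_⟩ <;>
  obtain ⟨i, rfl⟩ := e.surjective u <;> obtain ⟨j, rfl⟩ := e.surjective v <;>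
  simp only [Equiv.symm_apply_apply]
  · exact (hadj i j).symm
  · exact hsign i j

theorem adjMatrix_gamma5 : Gamma5.adjMatrix =
    !![0, -1, 0, 0, 1; -1, 0, 1, 0, 0; 0, 1, 0, 1, 0; 0, 0, 1, 0, 1; 1, 0, 0, 1, 0] := by
  ext i j
  fin_cases i <;> fin_cases j <;> simp [adjMatrix, Gamma5, ofMinMaxAux, ofSign, c5Aux]

theorem det_gamma5_charmatrix (a : ℝ) :
    (algebraMap ℝ (Matrix (Fin 5) (Fin 5) ℝ) a - Gamma5.adjMatrix).det =
      (a + 2) * (a ^ 2 - a - 1) ^ 2 := by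
  have hchar : algebraMap ℝ (Matrix (Fin 5) (Fin 5) ℝ) a - Gamma5.adjMatrix =
      !![a, 1, 0, 0, -1; 1, a, -1, 0, 0; 0, -1, a, -1, 0; 0, 0, -1, a, -1; -1, 0, 0, -1, a] := by
    rw [adjMatrix_gamma5]
    ext i j
    fin_cases i <;> fin_cases j <;> simp [Matrix.algebraMap_matrix_apply]
  rw [hchar]
  simp [Matrix.det_succ_row_zero, Fin.sum_univ_succ, Fin.succAbove]
  ring

theorem spectrum_gamma5 :
    spectrum ℝ Gamma5.adjMatrix = {-2, (1 - √5) / 2, (1 + √5) / 2} := by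
  have hq (a : ℝ) : a ^ 2 - a - 1 = (a - (1 - √5) / 2) * (a - (1 + √5) / 2) := by
    linear_combination (Real.sq_sqrt (show (0 : ℝ) ≤ 5 by norm_num)) / 4
  ext a
  rw [spectrum.mem_iff, Matrix.isUnit_iff_isUnit_det, isUnit_iff_ne_zero, not_not,
    det_gamma5_charmatrix, hq]
  simp [sub_eq_zero, add_eq_zero_iff_eq_neg]

theorem sqrt_five_mem_Ioo : √5 ∈ Set.Ioo (2 : ℝ) 3 :=
  ⟨by rw [Real.lt_sqrt (by norm_num)]; norm_num, by rw [Real.sqrt_lt' (by norm_num)]; norm_num⟩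

theorem lambda1_gamma5 : Gamma5.lambda1 = (1 + √5) / 2 := by
  obtain ⟨h2, -⟩ := sqrt_five_mem_Ioo
  rw [lambda1, Subsingleton.elim (Classical.decEq (Fin 5)) (instDecidableEqFin 5),
    spectrum_gamma5]
  refine IsGreatest.csSup_eq ⟨by simp, ?_⟩
  rintro y (rfl | rfl | rfl) <;> linarith

theorem lambdaMin_gamma5 : Gamma5.lambdaMin = -2 := by
  obtain ⟨h2, h3⟩ := sqrt_five_mem_Ioo
  rw [lambdaMin, Subsingleton.elim (Classical.decEq (Fin 5)) (instDecidableEqFin 5),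
    spectrum_gamma5]
  refine IsLeast.csInf_eq ⟨by simp, ?_⟩
  rintro y (rfl | rfl | rfl) <;> linarith

theorem rho_gamma5 : Gamma5.rho = 2 := by
  obtain ⟨-, h3⟩ := sqrt_five_mem_Ioo
  rw [rho, lambda1_gamma5, lambdaMin_gamma5, neg_neg]
  exact max_eq_right (by linarith)

end SignedGraph

open SignedGraph in
/-- Every unbalanced signed graph of order 5 with no negative 3-cycle and no
negative 4-cycle is switching isomorphic to `Γ₅`, the 5-cycle with exactly one negative
edge; moreover `ρ(Γ₅) = −λ₅(Γ₅) = 2` and `λ₁(Γ₅) = (1 + √5)/2`. -/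
theorem order_five_C34free_unbalanced {V : Type*} [Fintype V] (hcard : Fintype.card V = 5)
    (Γ : SignedGraph V) (hunb : Γ.Unbalanced)
    (h3 : ¬ Γ.HasNegCycleOfLength 3) (h4 : ¬ Γ.HasNegCycleOfLength 4) :
    Γ.SwitchingIsomorphic Gamma5 ∧
    Gamma5.rho = 2 ∧ Gamma5.lambdaMin = -2 ∧
    Gamma5.lambda1 = (1 + Real.sqrt 5) / 2 := by
  refine ⟨?_, rho_gamma5, lambdaMin_gamma5, lambda1_gamma5⟩
  obtain ⟨u, w, hw, hneg⟩ := Γ.exists_isCycle_walkSign_eq_neg_one hunb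
  have hlen : w.length = 4 + 1 := by
    have := hw.three_le_length
    have := hcard ▸ hw.length_le_card
    have : w.length ≠ 3 := fun h => h3 ⟨u, w, hw, hneg, h⟩
    have : w.length ≠ 4 := fun h => h4 ⟨u, w, hw, hneg, h⟩
    omega
  obtain ⟨x, hx⟩ := Γ.exists_isNegPolygon hw hneg hlen
  exact hx.switchingIsomorphic_gamma5 hcard (hx.not_adj_add_two h3 h4)
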